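/- arXiv:1308.3394 — 7 statements merged into one kernel-verified Lean document; each statement's English description precedes it below -/
import Mathlib

section
/- Let v be a valuation on a field K with valuation ring O_v, maximal ideal M_v, and residue field k_v = O_v/M_v. For any finite simple extension F = k_v(α) of the residue field, there is a finite field extension L of K and an extension w of v to L such that the residue field of w is isomorphic over k_v to F. Moreover one can take L = K(β) where β is a root of a monic lift P(x) ∈ O_v[x] of the minimal polynomial of α, and then [L:K] = [F:k_v]. -/
/-!
Lift the minimal polynomial `μ` of `α` to a monic `P` over `O_v`. As `μ` is irreducible, so is `P`,
over `O_v` and (Gauss) over `K`. In `L = K[X]/(P)` the root `β` is integral over every valuation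
ring `W` of `L` dominating `O_v` (Chevalley), so `β ∈ W` and its residue is a root of `μ`; this
embeds `k_v[X]/(μ) ≅ F` into `k_W`. The embedding is onto because `[k_W : k_v] ≤ [L : K] = deg μ`:
elements of `W` whose residues are `k_v`-independent are `K`-independent, since dividing a relation
by a coefficient of largest valuation and reducing gives a relation among the residues.
-/

open Polynomial IsLocalRing

theorem Polynomial.Monic.irreducible_map_of_irreducible_map_residue {R K : Type*} [CommRing R]
    [IsDomain R] [IsLocalRing R] [IsIntegrallyClosed R] [Field K] [Algebra R K]
    [IsFractionRing R K] {P : R[X]} (hP : P.Monic) (h : Irreducible (P.map (residue R))) :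
    Irreducible (P.map (algebraMap R K)) :=
  hP.irreducible_iff_irreducible_map_fraction_map.1 (hP.irreducible_of_irreducible_map _ _ h)

theorem Polynomial.Monic.finrank_adjoinRoot_map {R K : Type*} [CommRing R] [Field K] (f : R →+* K)
    {P : R[X]} (hP : P.Monic) : Module.finrank K (AdjoinRoot (P.map f)) = P.natDegree :=
  (finrank_quotient_span_eq_natDegree (f := P.map f)).trans (hP.natDegree_map f)

theorem AdjoinRoot.eval₂_root_map {R K : Type*} [CommRing R] [CommRing K] (f : R →+* K)
    (P : R[X]) : P.eval₂ ((algebraMap K (AdjoinRoot (P.map f))).comp f) (root (P.map f)) = 0 := by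
  rw [← eval₂_map, algebraMap_eq]
  exact eval₂_root _

namespace ValuationSubring

variable {K L : Type*} [Field K] [Field L] [Algebra K L] {O : ValuationSubring K}
  {W : ValuationSubring L} [Algebra O W]

theorem mem_of_eval₂_eq_zero
    (hOW : (algebraMap W L).comp (algebraMap O W) = (algebraMap K L).comp O.subtype)
    {P : O[X]} (hP : P.Monic) {β : L} (hβ : P.eval₂ ((algebraMap K L).comp O.subtype) β = 0) :
    β ∈ W := by
  have hint : IsIntegral W β := ⟨P.map (algebraMap O W), hP.map _, by rwa [eval₂_map, hOW]⟩
  obtain ⟨b, rfl⟩ := IsIntegrallyClosed.isIntegral_iff.1 hint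
  exact b.2

variable [IsLocalHom (algebraMap O W)]

theorem algebraMap_mem_iff_of_isLocalHom
    (hOW : (algebraMap W L).comp (algebraMap O W) = (algebraMap K L).comp O.subtype) (x : K) :
    algebraMap K L x ∈ W ↔ x ∈ O := by
  refine ⟨fun hx => by_contra fun hxO => ?_, fun hx => ?_⟩
  · have hx0 : x ≠ 0 := by rintro rfl; exact hxO O.zero_mem
    let y : O := ⟨x⁻¹, (O.mem_or_inv_mem x).resolve_left hxO⟩
    have hy : IsUnit (algebraMap O W y) := IsUnit.of_mul_eq_one ⟨algebraMap K L x, hx⟩ <|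
      Subtype.ext <| by
        change (algebraMap W L).comp (algebraMap O W) y * _ = 1
        rw [hOW, RingHom.comp_apply, ← map_mul]
        simp [y, inv_mul_cancel₀ hx0]
    obtain ⟨z, hz⟩ := (isUnit_of_map_unit _ y hy).exists_right_inv
    have hzx : x = z := (inv_mul_eq_one₀ hx0).1 (congrArg Subtype.val hz)
    exact hxO (hzx ▸ z.2)
  · exact (RingHom.congr_fun hOW ⟨x, hx⟩) ▸ (algebraMap O W ⟨x, hx⟩).2

theorem linearIndependent_of_linearIndependent_residue
    (hOW : (algebraMap W L).comp (algebraMap O W) = (algebraMap K L).comp O.subtype)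
    {ι : Type*} [Fintype ι] {y : ι → W}
    (hy : LinearIndependent (ResidueField O) fun i => residue W (y i)) :
    LinearIndependent K fun i => (y i : L) := by
  rw [Fintype.linearIndependent_iff]
  intro c hc
  by_contra! ⟨j, hj⟩
  obtain ⟨i₀, -, hmax⟩ := Finset.univ.exists_max_image (fun i => O.valuation (c i)) ⟨j, by simp⟩
  have hc₀ : c i₀ ≠ 0 := fun h => hj <| by
    simpa [h] using hmax j (Finset.mem_univ j)
  have hd : ∀ i, c i / c i₀ ∈ O := fun i => by
    rw [← valuation_le_one_iff, map_div₀, div_le_one₀ (zero_lt_iff.2 (by simpa using hc₀))]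
    exact hmax i (Finset.mem_univ i)
  let d : ι → O := fun i => ⟨c i / c i₀, hd i⟩
  have hrel : ∑ i, algebraMap O W (d i) * y i = 0 := Subtype.ext <| by
    have hcomp : ∀ i, ((algebraMap O W (d i) : W) : L) = algebraMap K L (c i / c i₀) :=
      fun i => DFunLike.congr_fun hOW (d i)
    simp only [AddSubmonoidClass.coe_finsetSum, MulMemClass.coe_mul, hcomp, ZeroMemClass.coe_zero]
    simp_rw [div_eq_mul_inv, map_mul, mul_right_comm _ (algebraMap K L _), ← Finset.sum_mul,
      ← Algebra.smul_def, hc, zero_mul]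
  have hres : ∑ i, residue O (d i) • residue W (y i) = 0 := by
    simpa [Algebra.smul_def] using congrArg (residue W) hrel
  have h1 : residue O (d i₀) = 1 := by
    rw [show d i₀ = 1 from Subtype.ext (div_self hc₀), map_one]
  exact one_ne_zero (h1 ▸ Fintype.linearIndependent_iff.1 hy _ hres i₀)

theorem rank_residueField_le_finrank
    (hOW : (algebraMap W L).comp (algebraMap O W) = (algebraMap K L).comp O.subtype)
    [FiniteDimensional K L] :
    Module.rank (ResidueField O) (ResidueField W) ≤ Module.finrank K L := by
  refine rank_le fun s hs => ?_
  choose y hy using fun z : s => residue_surjective (z : ResidueField W)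
  have hind := linearIndependent_of_linearIndependent_residue hOW (y := y) (by simpa [hy] using hs)
  simpa using hind.fintype_card_le_finrank

theorem aeval_residue_map_eq_zero
    (hOW : (algebraMap W L).comp (algebraMap O W) = (algebraMap K L).comp O.subtype)
    {P : O[X]} {β : W} (hβ : P.eval₂ ((algebraMap K L).comp O.subtype) β = 0) :
    aeval (residue W β) (P.map (residue O)) = 0 := by
  have hβ' : P.eval₂ (algebraMap O W) β = 0 := W.subtype_injective <| by
    rw [map_zero, hom_eval₂]
    exact (congrArg (fun f => eval₂ f (β : L) P) hOW).trans hβ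
  have hcomp : (algebraMap (ResidueField O) (ResidueField W)).comp (residue O) =
      (residue W).comp (algebraMap O W) := RingHom.ext fun _ => ResidueField.algebraMap_residue _
  rw [aeval_def, eval₂_map, hcomp, ← hom_eval₂, hβ', map_zero]

theorem bijective_liftAlgHom_residue
    (hOW : (algebraMap W L).comp (algebraMap O W) = (algebraMap K L).comp O.subtype)
    [FiniteDimensional K L] {μ : (ResidueField O)[X]} [Fact (Irreducible μ)]
    (hμ : Module.finrank K L ≤ μ.natDegree) {β : W} (hβ : aeval (residue W β) μ = 0) :
    Function.Bijective (AdjoinRoot.liftAlgHom μ (Algebra.ofId _ _) (residue W β) hβ) := by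
  let Ψ := AdjoinRoot.liftAlgHom μ (Algebra.ofId (ResidueField O) (ResidueField W)) (residue W β) hβ
  have hrank := rank_residueField_le_finrank hOW
  have : FiniteDimensional (ResidueField O) (ResidueField W) :=
    Module.rank_lt_aleph0_iff.1 (hrank.trans_lt Cardinal.natCast_lt_aleph0)
  let B := AdjoinRoot.powerBasis (Fact.out : Irreducible μ).ne_zero
  have : FiniteDimensional (ResidueField O) (AdjoinRoot μ) := B.finite
  have hdim : Module.finrank (ResidueField O) (AdjoinRoot μ) = μ.natDegree := by
    rw [B.finrank, AdjoinRoot.powerBasis_dim]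
  have hinj : Function.Injective Ψ.toLinearMap := Ψ.toRingHom.injective
  have hle := LinearMap.finrank_le_finrank_of_injective hinj
  refine ⟨hinj, (LinearMap.injective_iff_surjective_of_finrank_eq_finrank ?_).1 hinj⟩
  have := Module.finrank_le_of_rank_le hrank
  omega

theorem exists_residueField_equiv_adjoinRoot {P : O[X]} (hP : P.Monic)
    [Fact (Irreducible (P.map (algebraMap O K)))] {μ : (ResidueField O)[X]} [Fact (Irreducible μ)]
    (hPμ : P.map (residue O) = μ) :
    ∃ W : ValuationSubring (AdjoinRoot (P.map (algebraMap O K))),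
      (∀ x : K, algebraMap K _ x ∈ W ↔ x ∈ O) ∧
      ∃ e : ResidueField W ≃+* AdjoinRoot μ, ∀ (x : O) (y : W),
        (y : AdjoinRoot (P.map (algebraMap O K))) = algebraMap K _ x →
          e (residue W y) = AdjoinRoot.of μ (residue O x) := by
  let f := (algebraMap K (AdjoinRoot (P.map (algebraMap O K)))).comp O.subtype
  have hroot : P.eval₂ f (AdjoinRoot.root _) = 0 := AdjoinRoot.eval₂_root_map _ P
  -- Chevalley's extension theorem.
  obtain ⟨W, hW, hlocal⟩ := exists_factor_valuationRing f
  let : Algebra O W := (f.codRestrict W.toSubring hW).toAlgebra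
  have : IsLocalHom (algebraMap O W) := hlocal
  have hOW : (algebraMap W _).comp (algebraMap O W) = f := rfl
  have : FiniteDimensional K (AdjoinRoot (P.map (algebraMap O K))) := (hP.map _).finite_adjoinRoot
  have hdeg : Module.finrank K (AdjoinRoot (P.map (algebraMap O K))) ≤ μ.natDegree := by
    rw [hP.finrank_adjoinRoot_map, ← hPμ, hP.natDegree_map]
  let β : W := ⟨_, mem_of_eval₂_eq_zero hOW hP hroot⟩
  let Ψ := AlgEquiv.ofBijective _ <|
    bijective_liftAlgHom_residue hOW hdeg (hPμ ▸ aeval_residue_map_eq_zero (β := β) hOW hroot :)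
  refine ⟨W, algebraMap_mem_iff_of_isLocalHom hOW, Ψ.symm.toRingEquiv, fun x y hy => ?_⟩
  obtain rfl : y = algebraMap O W x := Subtype.ext hy
  rw [← ResidueField.algebraMap_residue, ← AdjoinRoot.algebraMap_eq]
  exact Ψ.symm.commutes _

end ValuationSubring

/-- Let `v` be a valuation on a field `K` with valuation ring `O_v` and residue field `k_v`.
For any finite simple extension `F = k_v(α)` of the residue field, there is a finite extension
`L = K(β)` of `K`, where `β` is a root of a monic lift `P ∈ O_v[x]` of the minimal polynomial
of `α`, and a valuation subring `W` of `L` extending `O_v`, such that the residue field of `W`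
is isomorphic to `F` over `k_v`, and `[L : K] = [F : k_v]`. -/
theorem stmt_1 {K : Type u} [Field K] {Γ₀ : Type*} [LinearOrderedCommGroupWithZero Γ₀]
    (v : Valuation K Γ₀)
    (F : Type v) [Field F] [Algebra (IsLocalRing.ResidueField v.valuationSubring) F]
    [FiniteDimensional (IsLocalRing.ResidueField v.valuationSubring) F]
    (α : F) (hα : Algebra.adjoin (IsLocalRing.ResidueField v.valuationSubring) {α} = ⊤) :
    ∃ (L : Type u) (_ : Field L) (_ : Algebra K L), FiniteDimensional K L ∧
      Module.finrank K L = Module.finrank (IsLocalRing.ResidueField v.valuationSubring) F ∧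
      (∃ (β : L) (P : Polynomial v.valuationSubring),
        Algebra.adjoin K {β} = ⊤ ∧ P.Monic ∧
        P.map (IsLocalRing.residue v.valuationSubring) =
          minpoly (IsLocalRing.ResidueField v.valuationSubring) α ∧
        Polynomial.eval₂ ((algebraMap K L).comp v.valuationSubring.subtype) β P = 0) ∧
      ∃ W : ValuationSubring L,
        (∀ x : K, algebraMap K L x ∈ W ↔ x ∈ v.valuationSubring) ∧
        ∃ e : IsLocalRing.ResidueField W ≃+* F,
          ∀ (x : v.valuationSubring) (y : W), (y : L) = algebraMap K L (x : K) →
            e (IsLocalRing.residue W y) =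
              algebraMap (IsLocalRing.ResidueField v.valuationSubring) F
                (IsLocalRing.residue v.valuationSubring x) := by
  have hα_int : IsIntegral (ResidueField v.valuationSubring) α := .of_finite _ α
  let μ := minpoly (ResidueField v.valuationSubring) α
  have : Fact (Irreducible μ) := ⟨minpoly.irreducible hα_int⟩
  obtain ⟨P, hPμ, -, hP⟩ := lifts_and_natDegree_eq_and_monic
    (mem_lifts_of_surjective residue_surjective μ) (minpoly.monic hα_int)
  have : Fact (Irreducible (P.map (algebraMap v.valuationSubring K))) :=
    ⟨hP.irreducible_map_of_irreducible_map_residue (hPμ ▸ Fact.out)⟩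
  let eF : AdjoinRoot μ ≃ₐ[ResidueField v.valuationSubring] F :=
    (minpoly.equivAdjoin hα_int).trans ((Subalgebra.equivOfEq _ _ hα).trans Subalgebra.topEquiv)
  have hdeg : Module.finrank K (AdjoinRoot (P.map (algebraMap v.valuationSubring K))) =
      Module.finrank (ResidueField v.valuationSubring) F :=
    calc _ = P.natDegree := hP.finrank_adjoinRoot_map _
      _ = μ.natDegree := by rw [← hPμ, hP.natDegree_map]
      _ = _ := finrank_quotient_span_eq_natDegree.symm
      _ = _ := eF.toLinearEquiv.finrank_eq
  obtain ⟨W, hW, e, he⟩ := ValuationSubring.exists_residueField_equiv_adjoinRoot hP hPμ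
  refine ⟨_, inferInstance, inferInstance, (hP.map _).finite_adjoinRoot, hdeg,
    ⟨AdjoinRoot.root _, P, AdjoinRoot.adjoinRoot_eq_top, hP, hPμ, AdjoinRoot.eval₂_root_map _ P⟩,
    W, hW, e.trans eF.toRingEquiv, fun x y hy => ?_⟩
  rw [RingEquiv.trans_apply, he x y hy, ← AdjoinRoot.algebraMap_eq]
  exact eF.commutes _
end

section
/- Let K be an infinite field of characteristic p > 0. If K is not perfect (i.e., K^p ≠ K), then the index of the subgroup (K*)^p of p-th powers in the multiplicative group K* is infinite. In particular, if [K* : (K*)^p] is finite, then K is perfect. -/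
/-!
If `a` is not a `p`-th power, the elements `a + c ^ p` (`c ∈ K`) lie in pairwise distinct classes
modulo `(Kˣ) ^ p`: a relation `a + d ^ p = (a + c ^ p) v ^ p` becomes, by additivity of Frobenius,
`a (1 - v) ^ p = (c v - d) ^ p`, which forces `v = 1` and then `c = d`.
-/

section CharP

variable {K : Type*} [Field K] {p : ℕ} [Fact p.Prime] [CharP K p] {a : K}

theorem add_pow_char_ne_zero (ha : ∀ y : K, y ^ p ≠ a) (c : K) : a + c ^ p ≠ 0 := by
  intro hc
  apply ha (0 - c)
  rw [sub_pow_char, zero_pow (Fact.out : p.Prime).ne_zero]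
  linear_combination -hc

theorem mul_one_sub_pow_char_eq {c d v : K} (h : a + d ^ p = (a + c ^ p) * v ^ p) :
    a * (1 - v) ^ p = (c * v - d) ^ p := by
  rw [sub_pow_char, sub_pow_char, one_pow, mul_pow]
  linear_combination h

theorem eq_of_add_pow_char_eq_mul_pow (ha : ∀ y : K, y ^ p ≠ a) {c d v : K}
    (h : a + d ^ p = (a + c ^ p) * v ^ p) : c = d := by
  have key := mul_one_sub_pow_char_eq h
  obtain rfl : v = 1 := by
    by_contra hv
    have hv' : (1 - v) ^ p ≠ 0 := pow_ne_zero _ (sub_ne_zero.mpr (Ne.symm hv))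
    exact ha ((c * v - d) / (1 - v)) (by rw [div_pow, ← key, mul_div_cancel_right₀ _ hv'])
  rw [sub_self, zero_pow (Fact.out : p.Prime).ne_zero, mul_zero, mul_one] at key
  exact sub_eq_zero.mp (pow_eq_zero_iff (Fact.out : p.Prime).ne_zero |>.mp key.symm)

theorem injective_mk_add_pow_char (ha : ∀ y : K, y ^ p ≠ a) :
    Function.Injective fun c : K ↦
      (Units.mk0 (a + c ^ p) (add_pow_char_ne_zero ha c) : Kˣ ⧸ (powMonoidHom p).range) := by
  intro c d hcd
  obtain ⟨v, hv⟩ := QuotientGroup.eq.mp hcd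
  refine eq_of_add_pow_char_eq_mul_pow ha (v := (v : K)) ?_
  simpa using congrArg Units.val (eq_mul_of_inv_mul_eq hv.symm)

end CharP

/-- An infinite field of characteristic `p > 0` which is not perfect has infinite index
`[K^* : (K^*)^p]`. -/
theorem stmt_3 (K : Type*) [Field K] [Infinite K] (p : ℕ) [Fact p.Prime] [CharP K p]
    (h : ∃ x : K, ∀ y : K, y ^ p ≠ x) :
    Infinite (Kˣ ⧸ (powMonoidHom p : Kˣ →* Kˣ).range) := by
  obtain ⟨a, ha⟩ := h
  exact Infinite.of_injective _ (injective_mk_add_pow_char ha)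
end

section
/- Let K be a field of characteristic p > 0 with a valuation v such that the index [K* : (K*)^p] is finite and the residue field k_v is infinite. Suppose a, b ∈ O_v are such that the residues of a and b lie in distinct cosets of (k_v)^p in k_v (as a multiplicative coset question: ā·(k_v)^p ≠ b̄·(k_v)^p, with ā, b̄ ≠ 0). Then a(K*)^p ≠ b(K*)^p. Consequently, if [K* : (K*)^p] is finite then the residue field k_v is perfect. -/
/-!
If `b` is a unit of the valuation ring and `a = b c ^ p` with `a` integral, then `c` is integral
too, so the residues of `a` and `b` differ by a `p`-th power.

Suppose `z` in the residue field is not a `p`-th power. From `z - t ^ p = (z - s ^ p) w ^ p` one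
gets `z (1 - w) ^ p = (t - s w) ^ p`, which forces `w = 1` and then `s = t`. So the elements
`z - t ^ p` lie in pairwise distinct classes modulo `p`-th powers, hence so do any lifts of them to
`K`, and a finite index of `(Kˣ) ^ p` makes the residue field finite. But finite fields are
perfect.
-/

open IsLocalRing

instance IsLocalRing.ResidueField.charP {R : Type*} [CommRing R] [IsLocalRing R] (p : ℕ)
    [Fact p.Prime] [CharP R p] : CharP (ResidueField R) p :=
  (CharP.charP_iff_prime_eq_zero Fact.out).mpr <| by
    rw [← map_natCast (residue R), CharP.cast_eq_zero, map_zero]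

theorem eq_of_sub_pow_eq_mul_pow {k : Type*} [Field k] (p : ℕ) [Fact p.Prime] [CharP k p]
    {z : k} (hz : ∀ w : k, w ^ p ≠ z) {s t w : k} (h : z - t ^ p = (z - s ^ p) * w ^ p) :
    s = t := by
  have key : z * (1 - w) ^ p = (t - s * w) ^ p := by
    rw [sub_pow_char, sub_pow_char, one_pow, mul_pow]
    linear_combination h
  by_cases hw : w = 1
  · subst hw
    rw [sub_self, zero_pow (NeZero.ne p), mul_zero, eq_comm, pow_eq_zero_iff (NeZero.ne p),
      mul_one, sub_eq_zero] at key
    exact key.symm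
  · have hw' : (1 - w) ^ p ≠ 0 := pow_ne_zero p (sub_ne_zero.mpr (Ne.symm hw))
    refine (hz ((t - s * w) / (1 - w)) ?_).elim
    rw [div_pow, ← key, mul_div_cancel_right₀ z hw']

namespace ValuationSubring

variable {K : Type*} [Field K] (A : ValuationSubring K)

instance charP (p : ℕ) [CharP K p] : CharP A p := CharP.subring K p A.toSubring

theorem mem_of_pow_mem {x : K} {n : ℕ} (hn : n ≠ 0) (h : x ^ n ∈ A) : x ∈ A := by
  rw [← valuation_le_one_iff, map_pow, pow_le_one_iff hn] at h
  exact (A.valuation_le_one_iff x).mp h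

theorem exists_residue_eq_mul_pow {a b : A} (hb : IsUnit b) {n : ℕ} (hn : n ≠ 0) {c : K}
    (h : (a : K) = b * c ^ n) : ∃ d : ResidueField A, residue A a = residue A b * d ^ n := by
  obtain ⟨u, rfl⟩ := hb
  have hc : c ∈ A := A.mem_of_pow_mem hn <| by
    have hcn : c ^ n = ((u⁻¹ * a : A) : K) := by
      rw [MulMemClass.coe_mul, h, ← mul_assoc, ← MulMemClass.coe_mul, Units.inv_mul,
        OneMemClass.coe_one, one_mul]
    exact hcn ▸ SetLike.coe_mem _
  exact ⟨residue A ⟨c, hc⟩, by rw [← map_pow, ← map_mul]; congr 1; exact Subtype.ext h⟩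

theorem coe_ne_mul_pow_of_residue_ne_mul_pow {a b : A} (hb : residue A b ≠ 0) {p : ℕ}
    (hp : p ≠ 0)
    (hab : ∀ d : ResidueField A, residue A a ≠ residue A b * d ^ p) (c : K) :
    (a : K) ≠ b * c ^ p := fun h ↦
  let ⟨d, hd⟩ := A.exists_residue_eq_mul_pow ((residue_ne_zero_iff_isUnit b).mp hb) hp h
  hab d hd

theorem exists_pow_eq_residue_of_finiteIndex_powMonoidHom_range (p : ℕ) [Fact p.Prime]
    [CharP K p] [(powMonoidHom p : Kˣ →* Kˣ).range.FiniteIndex] (z : ResidueField A) :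
    ∃ w, w ^ p = z := by
  by_contra! hz
  have hp : p ≠ 0 := NeZero.ne p
  choose a ha using fun t : ResidueField A ↦ residue_surjective (z - t ^ p)
  have hres : ∀ t, residue A (a t) ≠ 0 := fun t h ↦ hz t (sub_eq_zero.mp (ha t ▸ h)).symm
  have hne : ∀ t, (a t : K) ≠ 0 := fun t h ↦
    hres t (by rw [show a t = 0 from Subtype.ext h, map_zero])
  let cls : ResidueField A → Kˣ ⧸ (powMonoidHom p : Kˣ →* Kˣ).range :=
    fun t ↦ QuotientGroup.mk (Units.mk0 _ (hne t))
  have hcls : Function.Injective cls := by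
    intro s t hst
    obtain ⟨u, hu⟩ := QuotientGroup.eq.mp hst
    have hu' : (a t : K) = a s * (u : K) ^ p := by
      have hu := congrArg Units.val hu
      simp only [powMonoidHom_apply, Units.val_pow_eq_pow_val, Units.val_mul,
        Units.val_inv_eq_inv_val, Units.val_mk0] at hu
      rw [hu, mul_inv_cancel_left₀ (hne s)]
    by_contra hst'
    refine A.coe_ne_mul_pow_of_residue_ne_mul_pow (hres s) hp (fun d hd ↦ hst' ?_) u hu'
    exact eq_of_sub_pow_eq_mul_pow p hz (by rwa [← ha, ← ha])
  have : Finite (ResidueField A) := Finite.of_injective cls hcls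
  exact hz _ (surjective_frobenius _ p z).choose_spec

end ValuationSubring

theorem stmt_8_general {K : Type*} [Field K] (p : ℕ) [Fact p.Prime] [CharP K p]
    {Γ₀ : Type*} [LinearOrderedCommGroupWithZero Γ₀] (v : Valuation K Γ₀)
    (hfin : (powMonoidHom p : Kˣ →* Kˣ).range.FiniteIndex) :
    (∀ a b : v.valuationSubring,
      IsLocalRing.residue v.valuationSubring a ≠ 0 →
      IsLocalRing.residue v.valuationSubring b ≠ 0 →
      (∀ c : IsLocalRing.ResidueField v.valuationSubring,
        IsLocalRing.residue v.valuationSubring a ≠ IsLocalRing.residue v.valuationSubring b * c ^ p) →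
      ∀ c : K, (a : K) ≠ (b : K) * c ^ p) ∧
    (∀ z : IsLocalRing.ResidueField v.valuationSubring, ∃ w, w ^ p = z) :=
  ⟨fun _ _ _ hb ↦ v.valuationSubring.coe_ne_mul_pow_of_residue_ne_mul_pow hb (NeZero.ne p),
    v.valuationSubring.exists_pow_eq_residue_of_finiteIndex_powMonoidHom_range p⟩

/-- Let `K` be a field of characteristic `p > 0` with a valuation `v` such that
`[K^* : (K^*)^p]` is finite and the residue field `k_v` is infinite. If `a, b ∈ O_v` have
nonzero residues lying in distinct cosets of `(k_v^*)^p`, then `a` and `b` lie in distinct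
cosets of `(K^*)^p`. Consequently, the residue field `k_v` is perfect (Frobenius is
surjective on it). -/
theorem stmt_8 {K : Type*} [Field K] (p : ℕ) [Fact p.Prime] [CharP K p]
    {Γ₀ : Type*} [LinearOrderedCommGroupWithZero Γ₀] (v : Valuation K Γ₀)
    (hfin : (powMonoidHom p : Kˣ →* Kˣ).range.FiniteIndex)
    (hinf : Infinite (IsLocalRing.ResidueField v.valuationSubring)) :
    (∀ a b : v.valuationSubring,
      IsLocalRing.residue v.valuationSubring a ≠ 0 →
      IsLocalRing.residue v.valuationSubring b ≠ 0 →
      (∀ c : IsLocalRing.ResidueField v.valuationSubring,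
        IsLocalRing.residue v.valuationSubring a ≠ IsLocalRing.residue v.valuationSubring b * c ^ p) →
      ∀ c : K, (a : K) ≠ (b : K) * c ^ p) ∧
    (∀ z : IsLocalRing.ResidueField v.valuationSubring, ∃ w, w ^ p = z) :=
  stmt_8_general p v hfin
end

section
/- Let K be an infinite field such that every polynomial image is cofinite in the following sense: for every polynomial P ∈ K[x] of positive degree, the set K \ P(K) of values not attained by P is finite. Then for every n > 0, every element of K* is an n-th power, i.e., (K*)^n = K*. -/
/-!
Since `x ↦ xⁿ` has finite fibres, the nonzero `n`-th powers form an infinite set. If `y ≠ 0` were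
not an `n`-th power, neither would be any `y xⁿ` with `x ≠ 0`, so infinitely many values would be
missed by `Xⁿ`.
-/

open Polynomial

theorem finite_setOf_pow_eq {R : Type*} [CommRing R] [IsDomain R] {n : ℕ} (hn : 0 < n) (z : R) :
    {x : R | x ^ n = z}.Finite :=
  (nthRoots n z).finite_toSet.subset fun _ hx => (mem_nthRoots hn).2 hx

theorem infinite_image_pow_setOf_ne_zero {R : Type*} [CommRing R] [IsDomain R] [Infinite R]
    {n : ℕ} (hn : 0 < n) : ((· ^ n) '' {x : R | x ≠ 0}).Infinite := fun hfin =>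
  (Set.finite_singleton (0 : R)).infinite_compl <|
    (hfin.preimage' fun z _ => finite_setOf_pow_eq hn z).subset (Set.subset_preimage_image _ _)

theorem exists_pow_eq_of_mul_pow_eq {K : Type*} [Field K] {n : ℕ} {y x a : K} (hx : x ≠ 0)
    (h : a ^ n = y * x ^ n) : ∃ b, b ^ n = y :=
  ⟨a / x, by rw [div_pow, h, mul_div_cancel_right₀ _ (pow_ne_zero n hx)]⟩

/-- If `K` is an infinite field in which every polynomial of positive degree attains all but
finitely many values, then every nonzero element of `K` is an `n`-th power, for every `n > 0`. -/
theorem stmt_9 (K : Type*) [Field K] [Infinite K]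
    (h : ∀ P : Polynomial K, 0 < P.natDegree → {y : K | ∀ a : K, P.eval a ≠ y}.Finite) :
    ∀ n : ℕ, 0 < n → ∀ y : K, y ≠ 0 → ∃ x : K, x ^ n = y := by
  intro n hn y hy
  by_contra! hy_not_pow
  have hmissed : {z : K | ∀ a : K, (X ^ n : K[X]).eval a ≠ z}.Finite :=
    h _ (by rwa [natDegree_X_pow])
  have hcoset :
      (y * ·) '' ((· ^ n) '' {x : K | x ≠ 0}) ⊆ {z | ∀ a : K, (X ^ n : K[X]).eval a ≠ z} := by
    rintro _ ⟨_, ⟨x, hx, rfl⟩, rfl⟩ a ha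
    rw [eval_pow, eval_X] at ha
    obtain ⟨b, hb⟩ := exists_pow_eq_of_mul_pow_eq hx ha
    exact hy_not_pow b hb
  exact ((infinite_image_pow_setOf_ne_zero hn).image (mul_right_injective₀ hy).injOn).mono
    hcoset hmissed
end

section
/- Let K be an infinite field such that for every polynomial P ∈ K[x] of positive degree the complement K \ P(K) is finite, and let v be a non-trivial valuation on K. Then the value group Γ_v is divisible. -/
/-!
The nonzero `n`-th powers form a subgroup of `Kˣ` whose complement in `K` is finite, being
contained in the set of values missed by `X ^ n`. A proper subgroup would have a coset disjoint
from it, which is infinite since `K` is; so every element is an `n`-th power, and then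
`γ = v a = v (b ^ n) = n • v b`.
-/

theorem exists_pow_eq_of_finite_setOf_forall_pow_ne {K : Type*} [Field K] [Infinite K] {n : ℕ}
    (hn : n ≠ 0) (hfin : {y : K | ∀ c : K, c ^ n ≠ y}.Finite) (a : K) : ∃ b : K, b ^ n = a := by
  by_contra! ha
  have ha0 : a ≠ 0 := fun h => ha 0 (by simp [h, hn])
  have hpow_inf : (Set.range (· ^ n : K → K) \ {0}).Infinite := by
    refine Set.Infinite.sdiff ?_ (Set.finite_singleton 0)
    convert hfin.infinite_compl using 1
    ext; simp
  have hmaps : Set.MapsTo (a * ·) (Set.range (· ^ n : K → K) \ {0}) {y | ∀ c : K, c ^ n ≠ y} := by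
    rintro _ ⟨⟨c, rfl⟩, hc⟩ d hd
    have hc0 : c ≠ 0 := by rintro rfl; simp [hn] at hc
    exact ha (d / c) (by rw [div_pow, hd, mul_div_cancel_right₀ _ (pow_ne_zero n hc0)])
  exact hpow_inf (hfin.subset (Set.image_subset_iff.mpr hmaps) |>.of_finite_image
    (mul_right_injective₀ ha0).injOn)

theorem map_one_eq_zero_of_map_mul {K Γ : Type*} [Monoid K] [AddCancelMonoid Γ] (v : K → WithTop Γ)
    (h1 : v 1 ≠ ⊤) (hmul : ∀ x y : K, v (x * y) = v x + v y) : v 1 = 0 := by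
  refine (WithTop.add_left_cancel h1 ?_).symm
  rw [add_zero, ← hmul, one_mul]

theorem map_pow_of_map_mul {K A : Type*} [Monoid K] [AddMonoid A] (v : K → A) (h1 : v 1 = 0)
    (hmul : ∀ x y : K, v (x * y) = v x + v y) (b : K) (k : ℕ) : v (b ^ k) = k • v b := by
  induction k with
  | zero => simpa using h1
  | succ k ih => rw [pow_succ, hmul, ih, succ_nsmul]

theorem stmt_11_general (K : Type*) [Field K] [Infinite K]
    (hmin : ∀ P : Polynomial K, 0 < P.natDegree → {y : K | ∀ a : K, P.eval a ≠ y}.Finite)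
    {Γ : Type*} [AddCommGroup Γ] [LinearOrder Γ] [IsOrderedAddMonoid Γ]
    (v : K → WithTop Γ)
    (h0 : ∀ x : K, v x = ⊤ ↔ x = 0)
    (hmul : ∀ x y : K, v (x * y) = v x + v y)
    (hsurj : Function.Surjective v) :
    ∀ γ : Γ, ∀ n : ℕ, 0 < n → ∃ δ : Γ, n • δ = γ := by
  intro γ n hn
  have hv1 : v 1 = 0 := map_one_eq_zero_of_map_mul v (by simp [h0]) hmul
  obtain ⟨a, ha⟩ := hsurj γ
  obtain ⟨b, rfl⟩ := exists_pow_eq_of_finite_setOf_forall_pow_ne hn.ne'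
    (by simpa using hmin (Polynomial.X ^ n) (by simpa using hn)) a
  have hb : b ≠ 0 := by
    rintro rfl
    simp [zero_pow hn.ne', (h0 0).mpr rfl] at ha
  obtain ⟨δ, hδ⟩ := WithTop.ne_top_iff_exists.mp (mt (h0 b).mp hb)
  refine ⟨δ, WithTop.coe_injective ?_⟩
  rw [WithTop.coe_nsmul, hδ, ← map_pow_of_map_mul v hv1 hmul, ha]

/-- If `K` is an infinite field such that every polynomial of positive degree attains all but
finitely many values, then the value group of any non-trivial valuation on `K` is divisible. -/
theorem stmt_11 (K : Type*) [Field K] [Infinite K]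
    (hmin : ∀ P : Polynomial K, 0 < P.natDegree → {y : K | ∀ a : K, P.eval a ≠ y}.Finite)
    {Γ : Type*} [AddCommGroup Γ] [LinearOrder Γ] [IsOrderedAddMonoid Γ]
    (v : K → WithTop Γ)
    (h0 : ∀ x : K, v x = ⊤ ↔ x = 0)
    (hmul : ∀ x y : K, v (x * y) = v x + v y)
    (hadd : ∀ x y : K, min (v x) (v y) ≤ v (x + y))
    (hsurj : Function.Surjective v)
    (hnt : ∃ x : K, x ≠ 0 ∧ v x ≠ (0 : WithTop Γ)) :
    ∀ γ : Γ, ∀ n : ℕ, 0 < n → ∃ δ : Γ, n • δ = γ :=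
  stmt_11_general K hmin v h0 hmul hsurj
end

section
/- Let K be an infinite field such that for every polynomial P ∈ K[x] of positive degree the complement K \ P(K) is finite, and let v be a non-trivial valuation on K with valuation ring O_v, maximal ideal M_v and residue field k_v. Then k_v is algebraically closed. -/
/-!
Lift a monic polynomial over the residue field to a monic `Q` over the valuation ring. Since `Q`
misses only finitely many values while the maximal ideal is infinite, `Q(a)` lies in the maximal
ideal for some `a ∈ K`; then `a` is integral over the valuation ring, hence lies in it, and its
residue is a root of the reduced polynomial.
-/

open Polynomial

namespace Valuation

variable {K : Type*} [Field K] {Γ₀ : Type*} [LinearOrderedCommGroupWithZero Γ₀]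
  (v : Valuation K Γ₀)

theorem setOf_lt_one_infinite [v.IsNontrivial] : {x : K | v x < 1}.Infinite := by
  obtain ⟨z, hz0, hz1⟩ := IsNontrivial.exists_lt_one (v := v)
  have hanti : StrictAnti fun n : ℕ => v z ^ n := pow_right_strictAnti₀ (v.pos_iff.mpr hz0) hz1
  refine Set.infinite_of_injective_forall_mem (f := fun n : ℕ => z ^ (n + 1)) ?_ fun n => ?_
  · intro m n hmn
    have := hanti.injective (by simpa using congrArg v hmn : v z ^ (m + 1) = v z ^ (n + 1))
    omega
  · simpa using hanti (Nat.succ_pos n)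

theorem exists_eval_lt_one_of_finite_compl_range [v.IsNontrivial] {P : K[X]}
    (hP : {y : K | ∀ a : K, P.eval a ≠ y}.Finite) : ∃ a, v (P.eval a) < 1 := by
  obtain ⟨y, hy, hyP⟩ := (v.setOf_lt_one_infinite.sdiff hP).nonempty
  simp only [Set.mem_ofPred_eq, not_forall, not_not] at hyP
  obtain ⟨a, rfl⟩ := hyP
  exact ⟨a, hy⟩

theorem mem_valuationSubring_of_aeval_le_one {q : v.valuationSubring[X]} (hq : q.Monic)
    (hdeg : 0 < q.natDegree) {a : K} (ha : v (aeval a q) ≤ 1) : a ∈ v.valuationSubring := by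
  set c : v.valuationSubring := ⟨aeval a q, ha⟩
  have hint : IsIntegral v.valuationSubring a := by
    have hmonic : (q - C c).Monic :=
      hq.sub_of_left (degree_C_le.trans_lt (natDegree_pos_iff_degree_pos.mp hdeg))
    refine ⟨q - C c, hmonic, ?_⟩
    rw [← aeval_def, _root_.map_sub, aeval_C, sub_eq_zero]
    rfl
  exact (valuationSubring.integers v).mem_of_integral hint

theorem isRoot_map_residue_of_aeval_lt_one (q : v.valuationSubring[X]) {a : v.valuationSubring}
    (ha : v (aeval (a : K) q) < 1) :
    (q.map (IsLocalRing.residue v.valuationSubring)).IsRoot (IsLocalRing.residue _ a) := by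
  rw [IsRoot, eval_map_apply, IsLocalRing.residue_eq_zero_iff, mem_maximalIdeal_iff]
  have hcoe : ((q.eval a : v.valuationSubring) : K) = aeval (a : K) q := by
    rw [← coe_aeval_eq_eval]
    exact (aeval_algebraMap_apply K a q).symm
  rwa [hcoe]

end Valuation

theorem stmt_12_general (K : Type*) [Field K]
    (hmin : ∀ P : Polynomial K, 0 < P.natDegree → {y : K | ∀ a : K, P.eval a ≠ y}.Finite)
    {Γ₀ : Type*} [LinearOrderedCommGroupWithZero Γ₀] (v : Valuation K Γ₀)
    (hnt : ∃ x : K, x ≠ 0 ∧ v x ≠ 1) :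
    IsAlgClosed (IsLocalRing.ResidueField v.valuationSubring) := by
  obtain ⟨x, hx0, hx1⟩ := hnt
  have : v.IsNontrivial := ⟨⟨x, v.ne_zero_iff.mpr hx0, hx1⟩⟩
  refine IsAlgClosed.of_exists_root _ fun p hp hirr => ?_
  obtain ⟨q, rfl, hdeg, hq⟩ := lifts_and_degree_eq_and_monic
    (mem_lifts_of_surjective IsLocalRing.residue_surjective p) hp
  have hqdeg : 0 < q.natDegree := natDegree_eq_of_degree_eq hdeg ▸ hirr.natDegree_pos
  obtain ⟨a, ha⟩ := v.exists_eval_lt_one_of_finite_compl_range <| hmin (q.map (algebraMap _ K))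
    (by rwa [natDegree_map_eq_of_injective Subtype.val_injective])
  rw [eval_map_algebraMap] at ha
  have haO := v.mem_valuationSubring_of_aeval_le_one hq hqdeg ha.le
  exact ⟨_, v.isRoot_map_residue_of_aeval_lt_one q (a := ⟨a, haO⟩) ha⟩

/-- If `K` is an infinite field such that every polynomial of positive degree attains all but
finitely many values, then the residue field of any non-trivial valuation on `K` is
algebraically closed. -/
theorem stmt_12 (K : Type*) [Field K] [Infinite K]
    (hmin : ∀ P : Polynomial K, 0 < P.natDegree → {y : K | ∀ a : K, P.eval a ≠ y}.Finite)
    {Γ₀ : Type*} [LinearOrderedCommGroupWithZero Γ₀] (v : Valuation K Γ₀)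
    (hnt : ∃ x : K, x ≠ 0 ∧ v x ≠ 1) :
    IsAlgClosed (IsLocalRing.ResidueField v.valuationSubring) :=
  stmt_12_general K hmin v hnt
end

section
/- Let (K, v) be a valued field with residue field k_v such that k_v^m = k_v for every positive integer m coprime to char(k_v), and suppose char(k_v) = p > 0 and k_v^p ≠ k_v. Then k_v is infinite and the index [k_v^* : (k_v^*)^p] is infinite. -/
theorem aux18 {k : Type*} [Field k] (p : ℕ) [Fact p.Prime] [CharP k p]
    (hp : ∃ z : k, ∀ w : k, w ^ p ≠ z) :
    Infinite k ∧ Infinite (kˣ ⧸ (powMonoidHom p : kˣ →* kˣ).range) := by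
  obtain ⟨z, hz⟩ := hp
  have hp0 : p ≠ 0 := (Fact.out : p.Prime).ne_zero
  have hfrobinj : Function.Injective (fun x : k => x ^ p) := by
    intro x y h
    have h2 : (x - y) ^ p = 0 := by
      rw [sub_pow_char]
      simpa [sub_eq_zero] using h
    have := pow_eq_zero_iff hp0 |>.mp h2
    exact sub_eq_zero.mp this
  have hinf : Infinite k := by
    by_contra hfin
    rw [not_infinite_iff_finite] at hfin
    obtain ⟨w, hw⟩ := (Finite.injective_iff_surjective.mp hfrobinj) z
    exact hz w hw
  refine ⟨hinf, ?_⟩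
  -- z ≠ 0
  have hz0 : z ≠ 0 := fun h => hz 0 (by simp [h, hp0])
  have hne : ∀ l : k, 1 + l ^ p * z ≠ 0 := by
    intro l h
    have hl0 : l ≠ 0 := by
      rintro rfl; simp [hp0] at h
    apply hz (-l⁻¹)
    have : (-l⁻¹) ^ p = -(l ^ p)⁻¹ := by
      rw [neg_pow, neg_one_pow_char k p, inv_pow]; ring
    rw [this]
    have hlp : (l : k) ^ p ≠ 0 := pow_ne_zero _ hl0
    field_simp
    linear_combination -h
  set Q := kˣ ⧸ (powMonoidHom p : kˣ →* kˣ).range with hQ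
  let f : k → Q := fun l => QuotientGroup.mk (Units.mk0 (1 + l ^ p * z) (hne l))
  have hfinj : Function.Injective f := by
    intro a b hab
    have := QuotientGroup.eq.mp hab
    obtain ⟨y, hy⟩ := this
    -- hy : powMonoidHom p y = (u a)⁻¹ * u b
    have hval : (1 + a ^ p * z) * ((y : k)) ^ p = 1 + b ^ p * z := by
      have := congrArg (fun u : kˣ => (u : k)) hy
      simp only [powMonoidHom_apply, Units.val_mul, Units.val_pow_eq_pow_val,
        Units.val_inv_eq_inv_val, Units.val_mk0] at this
      field_simp [hne a] at this
      linear_combination this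
    set c : k := (y : k) with hc
    have key : (1 - c) ^ p = (a * c - b) ^ p * z := by
      rw [sub_pow_char, sub_pow_char, mul_pow, one_pow]
      linear_combination -hval
    by_cases hac : a * c - b = 0
    · have h1c : (1 - c) ^ p = 0 := by rw [key, hac]; simp [zero_pow hp0]
      have hc1 : c = 1 := by
        have := pow_eq_zero_iff hp0 |>.mp h1c
        have := sub_eq_zero.mp this
        exact this.symm
      have : a * 1 - b = 0 := by rw [← hc1]; exact hac
      have := sub_eq_zero.mp this
      simpa using this
    · exfalso
      apply hz ((1 - c) / (a * c - b))
      rw [div_pow, key]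
      field_simp
  exact Infinite.of_injective f hfinj

/-- Let `(K, v)` be a valued field with residue field `k_v` of characteristic `p > 0`. If every
element of `k_v` is an `m`-th power for every `m > 0` coprime to `p`, and `k_v` is not perfect
(`k_v^p ≠ k_v`), then `k_v` is infinite and the index `[k_v^* : (k_v^*)^p]` is infinite. -/
theorem stmt_18 {K : Type*} [Field K] {Γ₀ : Type*} [LinearOrderedCommGroupWithZero Γ₀]
    (v : Valuation K Γ₀) (p : ℕ) [Fact p.Prime]
    [CharP (IsLocalRing.ResidueField v.valuationSubring) p]
    (hm : ∀ m : ℕ, 0 < m → Nat.Coprime m p →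
      ∀ z : IsLocalRing.ResidueField v.valuationSubring, ∃ w, w ^ m = z)
    (hp : ∃ z : IsLocalRing.ResidueField v.valuationSubring,
      ∀ w : IsLocalRing.ResidueField v.valuationSubring, w ^ p ≠ z) :
    Infinite (IsLocalRing.ResidueField v.valuationSubring) ∧
    Infinite ((IsLocalRing.ResidueField v.valuationSubring)ˣ ⧸
      (powMonoidHom p : (IsLocalRing.ResidueField v.valuationSubring)ˣ →*
        (IsLocalRing.ResidueField v.valuationSubring)ˣ).range) := by
  exact aux18 p hp
end
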